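/- Let ρ be a density matrix with modular Hamiltonian K = -log ρ, and let P be the spectral projection of K onto eigenvalues in the interval [E₀ - a, E₀ + a]. If Tr(Pρ) ≥ 1 - ε/2 with ε < 1, then the state σ = PρP / Tr(PρP) satisfies ‖ρ - σ‖₁ ≤ 2ε, λ_max(σ) ≤ e^{-(E₀-a)}/(1-ε), and λ_min(σ) ≥ e^{-(E₀+a)}. -/

import Mathlib

open scoped ComplexOrder Matrix

open Classical in
/-- Square root of a positive semidefinite matrix (junk value `0` otherwise). -/
noncomputable def msqrt {n : Type*} [Fintype n] [DecidableEq n] (A : Matrix n n ℂ) :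
    Matrix n n ℂ :=
  if h : A.PosSemidef then
    (h.1.eigenvectorUnitary : Matrix n n ℂ) * Matrix.diagonal ((↑) ∘ Real.sqrt ∘ h.1.eigenvalues) *
      (star (h.1.eigenvectorUnitary : Matrix n n ℂ))
  else 0

/-- Trace norm `‖A‖₁ = Tr √(Aᴴ A)`. -/
noncomputable def traceNorm {n : Type*} [Fintype n] [DecidableEq n] (A : Matrix n n ℂ) : ℝ :=
  (msqrt (Aᴴ * A)).trace.re

lemma traceNorm_diag {n : Type*} [Fintype n] [DecidableEq n] (r : n → ℝ) :
    traceNorm (Matrix.diagonal fun i => (r i : ℂ)) = ∑ i, |r i| := by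
  rw [traceNorm]
  set A : Matrix n n ℂ := Matrix.diagonal fun i => (r i : ℂ) with hAdef
  set B : Matrix n n ℂ := Matrix.diagonal fun i => ((|r i| : ℝ) : ℂ) with hBdef
  have hB : B.PosSemidef := Matrix.posSemidef_diagonal_iff.mpr fun i => by
    rw [Complex.zero_le_real]; exact abs_nonneg _
  have hsq : B ^ 2 = Aᴴ * A := by
    rw [sq, hAdef, hBdef, Matrix.diagonal_conjTranspose, Matrix.diagonal_mul_diagonal,
      Matrix.diagonal_mul_diagonal]
    ext i j
    by_cases h : i = j
    · subst h
      simp only [Matrix.diagonal_apply_eq, Pi.star_apply, Complex.star_def,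
        Complex.conj_ofReal, ← Complex.ofReal_mul]
      norm_cast
      rw [← sq, ← sq]
      exact sq_abs (r i)
    · simp [Matrix.diagonal_apply_ne _ h]
  have hP : (Aᴴ * A).PosSemidef := Matrix.posSemidef_conjTranspose_mul_self A
  have : msqrt (Aᴴ * A) = B := by
    rw [msqrt, dif_pos hP]
    have h1 := hP.1.cfc_eq Real.sqrt
    rw [Matrix.IsHermitian.cfc, Unitary.conjStarAlgAut_apply] at h1
    open scoped MatrixOrder in
    have h2 : CFC.sqrt (Aᴴ * A) = B := CFC.sqrt_unique (by rw [← hsq, sq]) hB.nonneg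
    open scoped MatrixOrder in
    rw [CFC.sqrt_eq_real_sqrt (Aᴴ * A) hP.nonneg, cfcₙ_eq_cfc] at h2
    rw [← h2, h1]
    rfl
  rw [this, hBdef, Matrix.trace_diagonal]
  norm_cast

/-- Spectral truncation of a density matrix.  In the eigenbasis of `ρ` (where `ρ` is the
diagonal matrix of its eigenvalues `p i`), let `P` project onto the modular eigenvalues
`E i = -log p i` lying in `[E₀ - a, E₀ + a]`, and suppose `Tr(Pρ) ≥ 1 - ε/2` with `ε < 1`.
Then `σ = PρP/Tr(PρP)` satisfies `‖ρ - σ‖₁ ≤ 2ε`, `λ_max(σ) ≤ e^{-(E₀-a)}/(1-ε)` and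
`λ_min(σ) ≥ e^{-(E₀+a)}` (eigenvalues restricted to the support of `σ`). -/
theorem spectral_truncation
    {n : Type*} [Fintype n] [DecidableEq n]
    (p : n → ℝ) (hp : ∀ i, 0 < p i) (hsum : ∑ i, p i = 1)
    (E₀ a ε : ℝ) (ha : 0 ≤ a) (hε0 : 0 ≤ ε) (hε1 : ε < 1)
    (S : Finset n)
    (hS : S = Finset.univ.filter fun i =>
      E₀ - a ≤ -Real.log (p i) ∧ -Real.log (p i) ≤ E₀ + a)
    (Z : ℝ) (hZ : Z = ∑ i ∈ S, p i)
    (htr : 1 - ε / 2 ≤ Z)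
    (σ : n → ℝ) (hσ : σ = fun i => if i ∈ S then p i / Z else 0) :
    traceNorm ((Matrix.diagonal fun i => (p i : ℂ))
        - Matrix.diagonal fun i => (σ i : ℂ)) ≤ 2 * ε
    ∧ (∀ i ∈ S, σ i ≤ Real.exp (-(E₀ - a)) / (1 - ε))
    ∧ (∀ i ∈ S, Real.exp (-(E₀ + a)) ≤ σ i) := by
  have hZpos : 0 < Z := by linarith
  have hZ1 : Z ≤ 1 := by
    rw [hZ, ← hsum]
    exact Finset.sum_le_sum_of_subset_of_nonneg (Finset.subset_univ S)
      (fun i _ _ => (hp i).le)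
  have h1ε : 0 < 1 - ε := by linarith
  have h1εZ : 1 - ε ≤ Z := by linarith
  refine ⟨?_, ?_, ?_⟩
  · -- trace norm bound
    have hdiff : ((Matrix.diagonal fun i => (p i : ℂ))
        - Matrix.diagonal fun i => (σ i : ℂ))
        = Matrix.diagonal fun i => ((p i - σ i : ℝ) : ℂ) := by
      rw [Matrix.diagonal_sub]
      congr 1
      funext i
      push_cast
      ring
    rw [hdiff, traceNorm_diag]
    have hsplit : ∑ i, |p i - σ i| = ∑ i ∈ S, |p i - σ i| + ∑ i ∈ Sᶜ, |p i - σ i| :=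
      (Finset.sum_add_sum_compl S _).symm
    have hin : ∑ i ∈ S, |p i - σ i| = 1 - Z := by
      have : ∀ i ∈ S, |p i - σ i| = p i / Z - p i := by
        intro i hi
        have hσi : σ i = p i / Z := by rw [hσ]; simp [hi]
        have hle : p i ≤ p i / Z := by
          rw [le_div_iff₀ hZpos]
          nlinarith [hp i]
        rw [hσi, abs_of_nonpos (by linarith)]
        ring
      rw [Finset.sum_congr rfl this, Finset.sum_sub_distrib, ← Finset.sum_div, ← hZ,
        div_self hZpos.ne']
    have hout : ∑ i ∈ Sᶜ, |p i - σ i| = 1 - Z := by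
      have : ∀ i ∈ Sᶜ, |p i - σ i| = p i := by
        intro i hi
        have : σ i = 0 := by
          rw [hσ]; simp [Finset.mem_compl.mp hi]
        rw [this, sub_zero, abs_of_pos (hp i)]
      rw [Finset.sum_congr rfl this]
      have := Finset.sum_add_sum_compl S p
      rw [hsum] at this
      linarith [hZ ▸ this]
    rw [hsplit, hin, hout]
    linarith
  · -- upper bound on eigenvalues
    intro i hi
    have hi' := hi
    rw [hS, Finset.mem_filter] at hi'
    have hi2 := hi'.2
    have hlog : Real.log (p i) ≤ -(E₀ - a) := by linarith [hi2.1]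
    have hpi : p i ≤ Real.exp (-(E₀ - a)) := by
      calc p i = Real.exp (Real.log (p i)) := (Real.exp_log (hp i)).symm
        _ ≤ Real.exp (-(E₀ - a)) := Real.exp_le_exp.mpr hlog
    have hσi : σ i = p i / Z := by
      rw [hσ]; simp [hi]
    rw [hσi]
    exact div_le_div₀ (Real.exp_nonneg _) hpi h1ε h1εZ
  · -- lower bound on eigenvalues
    intro i hi
    have hi' := hi
    rw [hS, Finset.mem_filter] at hi'
    have hi2 := hi'.2
    have hlog : -(E₀ + a) ≤ Real.log (p i) := by linarith [hi2.2]
    have hpi : Real.exp (-(E₀ + a)) ≤ p i := by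
      calc Real.exp (-(E₀ + a)) ≤ Real.exp (Real.log (p i)) := Real.exp_le_exp.mpr hlog
        _ = p i := Real.exp_log (hp i)
    have hσi : σ i = p i / Z := by
      rw [hσ]; simp [hi]
    have : p i ≤ p i / Z := by
      rw [le_div_iff₀ hZpos]
      nlinarith [hp i]
    rw [hσi]
    linarith
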